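/- Let A be an algebra over an algebraically closed field K, and let x₁, x₂ be finite-dimensional A-modules with Hom_A(x₂,x₁)=0 and Ext²_A(x₁,x₂)=0. Let x be an extension of x₁ by x₂ with class γ ∈ Ext¹_A(x₁,x₂), and suppose x is rigid (Ext¹_A(x,x)=0) and End_A(x₂) = K. Then Ext¹_A(x₁,x) = 0. -/

import Mathlib

/-!
STATEMENT 8: Let A be an algebra over an algebraically closed field K, and let
x₁, x₂ be finite-dimensional A-modules with Hom_A(x₂,x₁)=0 and Ext²_A(x₁,x₂)=0.
Let x be an extension of x₁ by x₂, and suppose x is rigid (Ext¹_A(x,x)=0) and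
End_A(x₂) = K.  Then Ext¹_A(x₁,x) = 0.
-/

open CategoryTheory Module Opposite

universe u

/-- `Extⁿ_A(X,Y)`, as a `K`-module, for a `K`-algebra `A`. -/
noncomputable def extn (K A : Type u) [Field K] [Ring A] [Algebra K A] (n : ℕ)
    (X Y : ModuleCat.{u} A) : ModuleCat K :=
  ((Ext K (ModuleCat.{u} A) n).obj (op X)).obj Y

open CategoryTheory Limits CategoryTheory.Projective

universe v

noncomputable section
namespace ExtStmt8
set_option linter.unusedSectionVars false

variable {C : Type v} [Category.{u} C] [Abelian C] [EnoughProjectives C]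
variable {P M : C} (e : P ⟶ M) [Projective P] [Epi e]

def resComplex : ChainComplex C ℕ :=
  ChainComplex.mk' P (syzygies e) (d e) (fun f => ⟨_, d f, (Category.assoc _ _ _).trans ((congrArg _ (kernel.condition f)).trans comp_zero)⟩)

lemma resComplex_d_1_0 : (resComplex e).d 1 0 = d e := by
  simp [resComplex]

lemma resComplex_exactAt_succ (n : ℕ) : (resComplex e).ExactAt (n + 1) := by
  rw [HomologicalComplex.exactAt_iff' _ (n + 1 + 1) (n + 1) n (by simp) (by simp)]
  refine ShortComplex.exact_of_iso ?_ (exact_d_f ((resComplex e).d (n + 1) n))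
  exact ShortComplex.isoMk (ChainComplex.mk'XIso P (syzygies e) (d e) (fun f => ⟨_, d f, (Category.assoc _ _ _).trans ((congrArg _ (kernel.condition f)).trans comp_zero)⟩) n).symm
    (Iso.refl _) (Iso.refl _)
    ((congrArg (_ ≫ ·) (ChainComplex.mk'_d P (syzygies e) (d e) (fun f => ⟨_, d f, (Category.assoc _ _ _).trans ((congrArg _ (kernel.condition f)).trans comp_zero)⟩) n)).trans
      ((Iso.inv_hom_id_assoc _ _).trans (Category.comp_id _).symm))
    ((Category.id_comp _).trans (Category.comp_id _).symm)

instance resComplex_projective (n : ℕ) : Projective ((resComplex e).X n) := by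
  obtain (_ | _ | _ | n) := n
  · exact ‹Projective P›
  · apply Projective.projective_over
  · apply Projective.projective_over
  · apply Projective.projective_over

def resOfEpi : ProjectiveResolution M where
  complex := resComplex e
  π := (ChainComplex.toSingle₀Equiv _ _).symm ⟨e, by
        rw [resComplex_d_1_0]
        exact (Category.assoc _ _ _).trans ((congrArg _ (kernel.condition e)).trans comp_zero)⟩
  quasiIso := ⟨fun n => by
    cases n
    · rw [ChainComplex.quasiIsoAt₀_iff, ShortComplex.quasiIso_iff_of_zeros']
      · refine (ShortComplex.exact_and_epi_g_iff_of_iso ?_).2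
          ⟨exact_d_f e, by dsimp; infer_instance⟩
        exact ShortComplex.isoMk (Iso.refl _) (Iso.refl _) (Iso.refl _)
          ((Category.id_comp _).trans (Eq.trans (resComplex_d_1_0 e).symm (Category.comp_id _).symm))
            ((Category.id_comp _).trans (Eq.trans
              (ChainComplex.toSingle₀Equiv_symm_apply_f_zero (C := resComplex e) e
                ((congrArg (· ≫ e) (resComplex_d_1_0 e)).trans ((Category.assoc _ _ _).trans
                  ((congrArg _ (kernel.condition e)).trans comp_zero)))).symm
              (Category.comp_id _).symm))
      all_goals rfl
    · rw [quasiIsoAt_iff_exactAt']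
      · apply resComplex_exactAt_succ
      · apply ChainComplex.exactAt_succ_single_obj⟩

lemma subsingleton_iff_isZero {R : Type u} [Ring R] (X : ModuleCat.{u} R) :
    Subsingleton X ↔ IsZero X := by
  constructor
  · intro h; exact ModuleCat.isZero_of_subsingleton X
  · intro h
    refine ⟨fun a b => ?_⟩
    have h1 : (𝟙 X : X ⟶ X) = 0 := h.eq_of_src _ _
    have h2 : (LinearMap.id : X →ₗ[R] X) = 0 := congrArg ModuleCat.Hom.hom h1
    have := LinearMap.congr_fun h2 a
    have that := LinearMap.congr_fun h2 b
    simp at this that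
    rw [this, that]

section Criterion

variable (K : Type u) [Field K] {A : Type u} [Ring A] [Algebra K A]

set_option maxHeartbeats 1000000 in
lemma ext1_iff {P M N : ModuleCat.{u} A} (e : P ⟶ M) [Projective P] [Epi e] :
    Subsingleton (((Ext K (ModuleCat.{u} A) 1).obj (op M)).obj N) ↔
      ∀ f : (kernel e : ModuleCat.{u} A) ⟶ N, ∃ g : P ⟶ N, kernel.ι e ≫ g = f := by
  have iso := (resOfEpi e).isoExt (R := K) 1 N
  rw [iso.toLinearEquiv.toEquiv.subsingleton_congr]
  rw [subsingleton_iff_isZero]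
  rw [← HomologicalComplex.exactAt_iff_isZero_homology]
  rw [HomologicalComplex.exactAt_iff' _ 0 1 2 (by simp) (by simp)]
  rw [ShortComplex.moduleCat_exact_iff]
  dsimp only [HomologicalComplex.sc', HomologicalComplex.shortComplexFunctor']
  simp only [ChainComplex.linearYonedaObj_d]
  show (∀ (φ : (resOfEpi e).complex.X 1 ⟶ N), (resOfEpi e).complex.d 2 1 ≫ φ = 0 →
      ∃ ψ : (resOfEpi e).complex.X 0 ⟶ N, (resOfEpi e).complex.d 1 0 ≫ ψ = φ) ↔ _
  have hX : (resOfEpi e).complex = resComplex e := rfl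
  set ρ : (syzygies e : ModuleCat.{u} A) ⟶ kernel e := Projective.π (kernel e) with hρ
  haveI : Epi ρ := inferInstanceAs (Epi (Projective.π (kernel e)))
  have hd10 : (resOfEpi e).complex.d 1 0 = ρ ≫ kernel.ι e := resComplex_d_1_0 e
  have hcow : (resOfEpi e).complex.d 2 1 ≫ ρ = 0 := by
    exact (cancel_mono (kernel.ι e)).1 ((Category.assoc _ _ _).trans ((congrArg ((resOfEpi e).complex.d 2 1 ≫ ·) hd10.symm).trans (((resOfEpi e).complex.d_comp_d 2 1 0).trans zero_comp.symm)))
  -- exactness at 1 gives an epi kernel lift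
  have hex : ((resOfEpi e).complex.sc' 2 1 0).Exact := by
    rw [← HomologicalComplex.exactAt_iff' _ 2 1 0 (by simp) (by simp)]
    exact resComplex_exactAt_succ e 0
  have hexact : ∀ y : ((resOfEpi e).complex.X 1), ((resOfEpi e).complex.d 1 0) y = 0 →
      ∃ w : ((resOfEpi e).complex.X 2), ((resOfEpi e).complex.d 2 1) w = y := by
    have hh := (ShortComplex.moduleCat_exact_iff _).1 hex
    dsimp only [HomologicalComplex.sc', HomologicalComplex.shortComplexFunctor'] at hh
    exact hh
  constructor
  · intro h f
    obtain ⟨g, hg⟩ := h (ρ ≫ f) (by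
      exact (Category.assoc _ _ _).symm.trans ((congrArg (· ≫ f) hcow).trans zero_comp))
    refine ⟨g, ?_⟩
    exact (cancel_epi ρ).1 ((Category.assoc _ _ _).symm.trans ((congrArg (· ≫ g) hd10.symm).trans hg))
  · intro h f hf'
    -- kernel.ι of d10 kills f
    have h1 : kernel.ι ((resOfEpi e).complex.d 1 0) ≫ f = 0 := by
      ext z
      have hy : ((resOfEpi e).complex.d 1 0) ((kernel.ι ((resOfEpi e).complex.d 1 0)) z) = 0 := by
        have hz := comp_apply (kernel.ι ((resOfEpi e).complex.d 1 0))
          ((resOfEpi e).complex.d 1 0) z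
        rw [kernel.condition] at hz
        exact hz.symm.trans rfl
      obtain ⟨w, hw⟩ := hexact _ hy
      calc (kernel.ι ((resOfEpi e).complex.d 1 0) ≫ f) z
          = f ((kernel.ι ((resOfEpi e).complex.d 1 0)) z) := comp_apply _ _ _
        _ = f (((resOfEpi e).complex.d 2 1) w) := by rw [hw]
        _ = ((resOfEpi e).complex.d 2 1 ≫ f) w := (comp_apply _ _ _).symm
        _ = (0 : (kernel ((resOfEpi e).complex.d 1 0) : ModuleCat.{u} A) ⟶ N) z := by rw [hf']; rfl
    -- hence kernel.ι of ρ kills f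
    have h2 : kernel.ι ρ ≫ f = 0 := by
      have hl : kernel.lift ((resOfEpi e).complex.d 1 0) (kernel.ι ρ)
          ((congrArg (kernel.ι ρ ≫ ·) hd10).trans ((Category.assoc _ _ _).symm.trans ((congrArg (· ≫ kernel.ι e) (kernel.condition ρ)).trans zero_comp))) ≫
          kernel.ι ((resOfEpi e).complex.d 1 0) = kernel.ι ρ := kernel.lift_ι _ _ _
      exact (congrArg (· ≫ f) hl.symm).trans ((Category.assoc _ _ _).trans ((congrArg (_ ≫ ·) h1).trans comp_zero))
    obtain ⟨g, hg⟩ := h (Abelian.epiDesc ρ f h2)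
    refine ⟨g, ?_⟩
    exact (congrArg (· ≫ g) hd10).trans ((Category.assoc _ _ _).trans ((congrArg (ρ ≫ ·) hg).trans (Abelian.comp_epiDesc _ _ _)))

end Criterion

section Main

variable {A : Type u} [Ring A]

lemma mcomp_apply {X Y Z : ModuleCat.{u} A} (f : X ⟶ Y) (g : Y ⟶ Z) (z : X) :
    (f ≫ g) z = g (f z) := rfl

lemma kernel_exists {X Y : ModuleCat.{u} A} (f : X ⟶ Y) (y : X) (hy : f y = 0) :
    ∃ z : (kernel f : ModuleCat.{u} A), kernel.ι f z = y := by
  refine ⟨(ModuleCat.kernelIsoKer f).inv ⟨y, LinearMap.mem_ker.2 hy⟩, ?_⟩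
  have h1 : kernel.ι f ((ModuleCat.kernelIsoKer f).inv ⟨y, LinearMap.mem_ker.2 hy⟩)
      = ((ModuleCat.kernelIsoKer f).inv ≫ kernel.ι f) ⟨y, LinearMap.mem_ker.2 hy⟩ := rfl
  rw [h1, ModuleCat.kernelIsoKer_inv_kernel_ι]
  rfl

end Main

end ExtStmt8

section Statement

open ExtStmt8

theorem stmt8' (K A : Type u) [Field K] [Ring A] [Algebra K A]
    (x₂ x x₁ : ModuleCat.{u} A)
    (hhom : ∀ f : x₂ ⟶ x₁, f = 0)
    (i : x₂ ⟶ x) (p : x ⟶ x₁) (w : i ≫ p = 0)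
    (hse : (ShortComplex.mk i p w).ShortExact)
    (hrigid : Subsingleton (((Ext K (ModuleCat.{u} A) 1).obj (op x)).obj x))
    (hbrick : ∀ f : x₂ ⟶ x₂, ∃ c : K, f = c • 𝟙 x₂) :
    Subsingleton (((Ext K (ModuleCat.{u} A) 1).obj (op x₁)).obj x) := by
  haveI : Epi p := hse.epi_g
  haveI : Mono i := hse.mono_f
  set P : ModuleCat.{u} A := Projective.over x with hP
  set π : P ⟶ x := Projective.π x with hπdef
  haveI : Epi (π ≫ p) := epi_comp _ _
  rw [ext1_iff K (π ≫ p)]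
  have hyp := (ext1_iff K π).1 hrigid
  intro f
  -- the comparison map between the two kernels
  have hk0 : kernel.ι π ≫ (π ≫ p) = 0 := by
    rw [← Category.assoc, kernel.condition, zero_comp]
  set k : (kernel π : ModuleCat.{u} A) ⟶ kernel (π ≫ p) := kernel.lift (π ≫ p) (kernel.ι π) hk0
    with hkdef
  have hk : k ≫ kernel.ι (π ≫ p) = kernel.ι π := kernel.lift_ι _ _ _
  obtain ⟨g, hg⟩ := hyp (k ≫ f)
  set f' : (kernel (π ≫ p) : ModuleCat.{u} A) ⟶ x := f - kernel.ι (π ≫ p) ≫ g with hf'def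
  have hkf' : k ≫ f' = 0 := by
    rw [hf'def, Preadditive.comp_sub, ← Category.assoc, hk, hg, sub_self]
  -- the induced map to x₂
  have h0 : (kernel.ι (π ≫ p) ≫ π) ≫ p = 0 := by
    rw [Category.assoc, kernel.condition]
  obtain ⟨π', hπ'⟩ := KernelFork.IsLimit.lift' hse.fIsKernel (kernel.ι (π ≫ p) ≫ π) h0
  have hπ'i : π' ≫ i = kernel.ι (π ≫ p) ≫ π := hπ'
  have hiinj : Function.Injective i := (ModuleCat.mono_iff_injective i).1 inferInstance
  haveI : Epi π' := by
    rw [ModuleCat.epi_iff_surjective]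
    intro b
    obtain ⟨a, ha⟩ := (ModuleCat.epi_iff_surjective π).1 inferInstance (i b)
    have hap : (π ≫ p) a = 0 := by
      have h1 : (π ≫ p) a = p (π a) := mcomp_apply π p a
      have h2 : p (i b) = (i ≫ p) b := (mcomp_apply i p b).symm
      rw [h1, ha, h2, w]
      rfl
    obtain ⟨z, hz⟩ := kernel_exists (π ≫ p) a hap
    refine ⟨z, hiinj ?_⟩
    have h3 : i (π' z) = π (kernel.ι (π ≫ p) z) := ConcreteCategory.congr_hom hπ'i z
    rw [h3, hz, ha]
  have h2 : kernel.ι π' ≫ f' = 0 := by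
    ext z
    have e2 : π' (kernel.ι π' z) = (0 : x₂) := ConcreteCategory.congr_hom (kernel.condition π') z
    have e1 : i (π' (kernel.ι π' z)) = π (kernel.ι (π ≫ p) (kernel.ι π' z)) :=
      ConcreteCategory.congr_hom hπ'i (kernel.ι π' z)
    have hπa : π (kernel.ι (π ≫ p) (kernel.ι π' z)) = 0 := by
      rw [← e1, e2, map_zero]
    obtain ⟨b, hb⟩ := kernel_exists π _ hπa
    have hkb : k b = kernel.ι π' z := by
      apply (ModuleCat.mono_iff_injective (kernel.ι (π ≫ p))).1 inferInstance
      have h5 : kernel.ι (π ≫ p) (k b) = kernel.ι π b := ConcreteCategory.congr_hom hk b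
      rw [h5, hb]
    have key : f' (kernel.ι π' z) = (0 : x) := by
      rw [← hkb]
      exact ConcreteCategory.congr_hom hkf' b
    exact key
  set u : x₂ ⟶ x := Abelian.epiDesc π' f' h2 with hudef
  have hu : π' ≫ u = f' := Abelian.comp_epiDesc _ _ _
  obtain ⟨v, hv⟩ := KernelFork.IsLimit.lift' hse.fIsKernel u (hhom (u ≫ p))
  have hv' : v ≫ i = u := hv
  obtain ⟨c, hc⟩ := hbrick v
  have hui : u = c • i := by
    rw [← hv', hc, Linear.smul_comp, Category.id_comp]
  have hf'c : f' = c • (kernel.ι (π ≫ p) ≫ π) := by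
    rw [← hu, hui, Linear.comp_smul, hπ'i]
  refine ⟨g + c • π, ?_⟩
  rw [Preadditive.comp_add, Linear.comp_smul, ← hf'c, hf'def]
  abel

end Statement

theorem stmt8 (K A : Type u) [Field K] [IsAlgClosed K] [Ring A] [Algebra K A]
    (x₂ x x₁ : ModuleCat.{u} A)
    [FiniteDimensional K ((ModuleCat.restrictScalars (algebraMap K A)).obj x₁)]
    [FiniteDimensional K ((ModuleCat.restrictScalars (algebraMap K A)).obj x₂)]
    -- Hom_A(x₂,x₁) = 0
    (hhom : ∀ f : x₂ ⟶ x₁, f = 0)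
    -- Ext²_A(x₁,x₂) = 0
    (hext2 : Subsingleton (extn K A 2 x₁ x₂))
    -- x is an extension of x₁ by x₂
    (i : x₂ ⟶ x) (p : x ⟶ x₁) (w : i ≫ p = 0)
    (hse : (ShortComplex.mk i p w).ShortExact)
    -- x is rigid
    (hrigid : Subsingleton (extn K A 1 x x))
    -- x₂ is a brick: End_A(x₂) = K
    (hbrick : ∀ f : x₂ ⟶ x₂, ∃ c : K, f = c • 𝟙 x₂) :
    Subsingleton (extn K A 1 x₁ x) := by
  exact stmt8' K A x₂ x x₁ hhom i p w hse hrigid hbrick
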